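/- Let (X,d) be a complete separable metric space and μ a Borel probability measure on X. For every C ∈ ℝ, the sublevel set {ν ∈ 𝒫(X) : H(ν | μ) ≤ C} of the relative entropy is tight: for every ε > 0 there is a compact K ⊆ X with ν(X \ K) ≤ ε for all ν in the sublevel set. -/

import Mathlib

/-!
A bound `H(ν | μ) ≤ C` makes `ν` uniformly absolutely continuous with respect to `μ`: splitting
according to whether the density `g = dν/dμ` exceeds a threshold `t > 1`,
`ν(A) ≤ t μ(A) + (C + 1) / log t`, because on `{g > t}` we have `g ≤ g log g / log t`.
Choosing `t` large and then `K` compact with `μ(Kᶜ)` small (a single Borel probability measure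
on a Polish space is tight) gives `ν(Kᶜ) ≤ ε` for the whole sublevel set.
-/

open MeasureTheory Filter Topology ENNReal

open Classical in
/-- Relative entropy `H(ν | μ)` (value `⊤` if `ν` is not absolutely continuous with
respect to `μ` or the log-likelihood ratio is not integrable). -/
noncomputable def relEntropy {X : Type*} [MeasurableSpace X] (ν μ : Measure X) : ℝ≥0∞ :=
  if ν ≪ μ ∧ Integrable (llr ν μ) ν then ENNReal.ofReal (∫ x, llr ν μ x ∂ν) else ⊤

open Real in
lemma Real.le_add_mul_log_add_one_div_log {y t : ℝ} (hy : 0 ≤ y) (ht : 1 < t) :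
    y ≤ t + (y * log y + 1) / log t := by
  have hlog_t : 0 < log t := log_pos ht
  have hmul_log : 0 ≤ y * log y + 1 := by linarith [self_sub_one_le_mul_log hy]
  rcases le_or_gt y t with hyt | hty
  · have : 0 ≤ (y * log y + 1) / log t := by positivity
    linarith
  · have hlog : y * log t ≤ y * log y :=
      mul_le_mul_of_nonneg_left (log_le_log (by linarith) hty.le) hy
    calc y ≤ (y * log y + 1) / log t := by rw [le_div_iff₀ hlog_t]; linarith
      _ ≤ t + (y * log y + 1) / log t := by linarith

section EntropyComparison

variable {X : Type*} [MeasurableSpace X] {ν μ : Measure X}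

lemma measureReal_le_mul_add_integral_llr_div_log [IsFiniteMeasure ν] [IsFiniteMeasure μ]
    (hνμ : ν ≪ μ) (hint : Integrable (llr ν μ) ν) {t : ℝ} (ht : 1 < t) (s : Set X) :
    ν.real s ≤ t * μ.real s + (∫ x, llr ν μ x ∂ν + μ.real Set.univ) / Real.log t := by
  set g : X → ℝ := fun x ↦ (ν.rnDeriv μ x).toReal
  set φ : X → ℝ := fun x ↦ g x * Real.log (g x) + 1
  have hg_int : Integrable g μ := Measure.integrable_toReal_rnDeriv
  have hφ_int : Integrable φ μ :=
    ((integrable_rnDeriv_mul_log_iff hνμ).2 hint).add (integrable_const 1)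
  have hφ_nonneg : ∀ x, 0 ≤ φ x := fun x ↦ by
    have hg : 0 ≤ g x := ENNReal.toReal_nonneg
    linarith [Real.self_sub_one_le_mul_log hg]
  have hφ_integral : ∫ x, φ x ∂μ = ∫ x, llr ν μ x ∂ν + μ.real Set.univ := by
    rw [integral_add ((integrable_rnDeriv_mul_log_iff hνμ).2 hint) (integrable_const 1),
      integral_rnDeriv_mul_log hνμ, integral_const, smul_eq_mul, mul_one]
  calc ν.real s = ∫ x in s, g x ∂μ := (Measure.setIntegral_toReal_rnDeriv hνμ s).symm
    _ ≤ ∫ x in s, (t + (Real.log t)⁻¹ * φ x) ∂μ := by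
        refine setIntegral_mono hg_int.integrableOn
          ((integrable_const t).add (hφ_int.const_mul _)).integrableOn fun x ↦ ?_
        rw [← div_eq_inv_mul]
        exact Real.le_add_mul_log_add_one_div_log ENNReal.toReal_nonneg ht
    _ = t * μ.real s + (Real.log t)⁻¹ * ∫ x in s, φ x ∂μ := by
        rw [integral_add (integrable_const t).integrableOn (hφ_int.const_mul _).integrableOn,
          setIntegral_const, integral_const_mul, smul_eq_mul, mul_comm]
    _ ≤ t * μ.real s + (Real.log t)⁻¹ * ∫ x, φ x ∂μ := by
        have hφ_le := setIntegral_le_integral (s := s) hφ_int (Eventually.of_forall hφ_nonneg)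
        have hlog_inv : 0 ≤ (Real.log t)⁻¹ := inv_nonneg.2 (Real.log_pos ht).le
        gcongr
    _ = t * μ.real s + (∫ x, llr ν μ x ∂ν + μ.real Set.univ) / Real.log t := by
        rw [hφ_integral, div_eq_inv_mul]

lemma integral_llr_le_of_relEntropy_le {C : ℝ} (h : relEntropy ν μ ≤ ENNReal.ofReal C) :
    ν ≪ μ ∧ Integrable (llr ν μ) ν ∧ ∫ x, llr ν μ x ∂ν ≤ max C 0 := by
  unfold relEntropy at h
  split_ifs at h with hfin
  · exact ⟨hfin.1, hfin.2, le_max_iff.2 (ENNReal.ofReal_le_ofReal_iff'.1 h)⟩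
  · exact absurd (top_le_iff.1 h) ENNReal.ofReal_ne_top

lemma exists_pos_forall_measureReal_le_of_relEntropy_le [IsFiniteMeasure μ] (C : ℝ) {ε : ℝ}
    (hε : 0 < ε) :
    ∃ δ > 0, ∀ ν : Measure X, IsFiniteMeasure ν → relEntropy ν μ ≤ ENNReal.ofReal C →
      ∀ s, μ.real s ≤ δ → ν.real s ≤ ε := by
  set N := max C 0 + μ.real Set.univ + 1
  have hN : 0 < N := by positivity
  set t := Real.exp (2 * N / ε)
  have ht : 1 < t := Real.one_lt_exp_iff.2 (by positivity)
  have hlog_t : Real.log t = 2 * N / ε := Real.log_exp _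
  refine ⟨ε / (2 * t), by positivity, fun ν _ hrel s hs ↦ ?_⟩
  obtain ⟨hνμ, hint, hH⟩ := integral_llr_le_of_relEntropy_le hrel
  have hsmall : t * μ.real s ≤ ε / 2 := by
    calc t * μ.real s ≤ t * (ε / (2 * t)) := by gcongr
      _ = ε / 2 := by field_simp
  have hentropy : (∫ x, llr ν μ x ∂ν + μ.real Set.univ) / Real.log t ≤ ε / 2 := by
    rw [hlog_t, div_le_iff₀ (by positivity)]
    calc ∫ x, llr ν μ x ∂ν + μ.real Set.univ ≤ N := by linarith
      _ = ε / 2 * (2 * N / ε) := by field_simp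
  linarith [measureReal_le_mul_add_integral_llr_div_log hνμ hint ht s]

end EntropyComparison

/-- On a complete separable metric space, the sublevel sets
`{ν : H(ν | μ) ≤ C}` of the relative entropy with respect to a Borel probability
measure `μ` are tight. -/
theorem relEntropy_sublevel_tight
    {X : Type*} [MetricSpace X] [CompleteSpace X] [TopologicalSpace.SeparableSpace X]
    [MeasurableSpace X] [BorelSpace X]
    (μ : Measure X) [IsProbabilityMeasure μ] (C : ℝ) :
    ∀ ε : ℝ, 0 < ε → ∃ K : Set X, IsCompact K ∧
      ∀ ν : Measure X, IsProbabilityMeasure ν → relEntropy ν μ ≤ ENNReal.ofReal C →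
        ν Kᶜ ≤ ENNReal.ofReal ε := by
  intro ε hε
  obtain ⟨δ, hδ, hν_small⟩ := exists_pos_forall_measureReal_le_of_relEntropy_le (μ := μ) C hε
  obtain ⟨K, hK, hμK⟩ :=
    isTightMeasureSet_iff_exists_isCompact_measure_compl_le.1
      (isTightMeasureSet_singleton (μ := μ)) (ENNReal.ofReal δ) (ENNReal.ofReal_pos.2 hδ)
  refine ⟨K, hK, fun ν _ hrel ↦ ?_⟩
  rw [ENNReal.le_ofReal_iff_toReal_le (measure_ne_top ν _) hε.le]
  exact hν_small ν inferInstance hrel Kᶜ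
    (ENNReal.toReal_le_of_le_ofReal hδ.le (hμK μ rfl))
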